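/- For every n ≥ 1, the number N(n) of subsets S ⊆ [3]^n meeting the prime conditions satisfies 2^(3^n − 1) < N(n) < 2^(3^n). -/

import Mathlib

namespace KripkeModal

/-- Formulas of the modal language `L_□`: atoms `T(x)`, `F(x)` for variables
`x : ℕ`, negation, conjunction, and box. -/
inductive Fml : Type
  | tt : ℕ → Fml   -- T(x)
  | ff : ℕ → Fml   -- F(x)
  | neg : Fml → Fml
  | and : Fml → Fml → Fml
  | box : Fml → Fml
deriving DecidableEq

namespace Fml

/-- Material implication, defined from `¬, ∧`. -/
def imp (φ ψ : Fml) : Fml := neg (and φ (neg ψ))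

/-- Disjunction, defined from `¬, ∧`. -/
def or (φ ψ : Fml) : Fml := neg (and (neg φ) (neg ψ))

/-- Biconditional. -/
def iff (φ ψ : Fml) : Fml := and (imp φ ψ) (imp ψ φ)

/-- Diamond: `◇φ := ¬□¬φ`. -/
def dia (φ : Fml) : Fml := neg (box (neg φ))

/-- `N(x) := ¬T(x) ∧ ¬F(x)`. -/
def Nf (x : ℕ) : Fml := and (neg (tt x)) (neg (ff x))

/-- A fixed contradiction. -/
def bot : Fml := and (tt 0) (neg (tt 0))

end Fml

open Fml

/-- Evaluate a formula propositionally under a valuation `v` of the "atoms":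
the atomic formulas `T(x)`, `F(x)` and all boxed formulas are treated as
propositional atoms. -/
def evalProp (v : Fml → Bool) : Fml → Bool
  | Fml.neg φ => !(evalProp v φ)
  | Fml.and φ ψ => evalProp v φ && evalProp v ψ
  | φ => v φ

/-- A formula is a substitution instance of a classical propositional tautology
iff it evaluates to true under every propositional valuation of its atoms. -/
def Tautology (φ : Fml) : Prop := ∀ v : Fml → Bool, evalProp v φ = true

/-- Provability in the modal system `S5[Ax]`: the smallest set of formulas
containing all substitution instances of propositional tautologies, all
instances of K, T and 5, all formulas in `Ax`, closed under modus ponens and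
necessitation.  Taking `Ax = ∅` gives `S5` itself. -/
inductive Prv (Ax : Set Fml) : Fml → Prop
  | taut {φ} : Tautology φ → Prv Ax φ
  | axK (A B : Fml) : Prv Ax (imp (box (imp A B)) (imp (box A) (box B)))
  | axT (A : Fml) : Prv Ax (imp (box A) A)
  | ax5 (A : Fml) : Prv Ax (imp (dia A) (box (dia A)))
  | axm {φ} : φ ∈ Ax → Prv Ax φ
  | mp {A B} : Prv Ax (imp A B) → Prv Ax A → Prv Ax B
  | nec {A} : Prv Ax A → Prv Ax (box A)

/-- A system is consistent if it does not prove a contradiction. -/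
def Consistent (Ax : Set Fml) : Prop := ¬ Prv Ax Fml.bot

/-- The axiom schema `Con`: `¬(T(x) ∧ F(x))`. -/
def ConAx : Set Fml := { φ | ∃ x : ℕ, φ = neg (and (tt x) (ff x)) }

/-- The axiom schema `Ground`: `(◇T(x) ∧ ◇F(x)) → ◇N(x)`. -/
def GroundAx : Set Fml :=
  { φ | ∃ x : ℕ, φ = imp (and (dia (tt x)) (dia (ff x))) (dia (Nf x)) }

/-- Conjunction of a list of formulas (empty conjunction is `¬⊥`). -/
def bigAnd : List Fml → Fml
  | [] => Fml.neg Fml.bot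
  | [φ] => φ
  | φ :: ψ :: rest => Fml.and φ (bigAnd (ψ :: rest))

/-- Disjunction of a list of formulas (the empty disjunction is the fixed
contradiction `⊥`). -/
def bigOr : List Fml → Fml
  | [] => Fml.bot
  | [φ] => φ
  | φ :: ψ :: rest => Fml.or φ (bigOr (ψ :: rest))

/-- The axiom schema `Min_n`: all instances
`(◇N(x_1) ∧ … ∧ ◇N(x_n)) → ◇(N(x_1) ∧ … ∧ N(x_n))` obtained by substituting
arbitrary (not necessarily distinct) variables for `x_1, …, x_n`. -/
def MinAx (n : ℕ) : Set Fml :=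
  { φ | ∃ l : List ℕ, l.length = n ∧
      φ = imp (bigAnd (l.map (fun x => dia (Nf x)))) (dia (bigAnd (l.map Nf))) }

/-- A formula is extensional if it contains no `□`. -/
def Extensional : Fml → Prop
  | tt _ => True
  | ff _ => True
  | Fml.neg φ => Extensional φ
  | Fml.and φ ψ => Extensional φ ∧ Extensional ψ
  | box _ => False

/-- A formula is intensional if every atomic subformula occurs within the
scope of a `□`. -/
def Intensional : Fml → Prop
  | tt _ => False
  | ff _ => False
  | Fml.neg φ => Intensional φ
  | Fml.and φ ψ => Intensional φ ∧ Intensional ψ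
  | box _ => True

/-- The set of variables occurring in a formula. -/
def vars : Fml → Set ℕ
  | tt x => {x}
  | ff x => {x}
  | Fml.neg φ => vars φ
  | Fml.and φ ψ => vars φ ∪ vars ψ
  | box φ => vars φ

/-- An `n`-formula: one whose atoms use only the variables `x_1, …, x_n`. -/
def IsNFormula (n : ℕ) (φ : Fml) : Prop := vars φ ⊆ {x | 1 ≤ x ∧ x ≤ n}

/-- A 1-formula: one whose atoms use only the single variable `x_1`. -/
abbrev Is1Formula (φ : Fml) : Prop := IsNFormula 1 φ

/-- `φ` is `Γ`-maximal for the system `S5[Ax]`. -/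
def GammaMaximal (Ax : Set Fml) (Γ : Set Fml) (φ : Fml) : Prop :=
  Consistent (Ax ∪ {φ}) ∧ φ ∈ Γ ∧
    ∀ ψ ∈ Γ, Prv Ax (imp φ ψ) ∨ Prv Ax (imp φ (neg ψ))

/-- Extensional `n`-isolators for `S5[Ax]`. -/
def ExtIsolator (n : ℕ) (Ax : Set Fml) (φ : Fml) : Prop :=
  GammaMaximal Ax {ψ | Extensional ψ ∧ IsNFormula n ψ} φ

/-- Intensional `n`-isolators for `S5[Ax]`. -/
def IntIsolator (n : ℕ) (Ax : Set Fml) (φ : Fml) : Prop :=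
  GammaMaximal Ax {ψ | Intensional ψ ∧ IsNFormula n ψ} φ

/-- An `n`-isolator for `S5[Ax]`: a consistent conjunction `ε ∧ ι` of an
extensional `n`-isolator and an intensional `n`-isolator. -/
def Isolator (n : ℕ) (Ax : Set Fml) (φ : Fml) : Prop :=
  ∃ ε ι, ExtIsolator n Ax ε ∧ IntIsolator n Ax ι ∧
    φ = Fml.and ε ι ∧ Consistent (Ax ∪ {φ})

/-- Satisfaction in a model `(W, V)` (with `V = (V1, V2)`) at a world `w`. -/
def Sat {W : Type*} (V1 V2 : ℕ → Set W) : W → Fml → Prop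
  | w, tt x => w ∈ V1 x
  | w, ff x => w ∈ V2 x
  | w, Fml.neg φ => ¬ Sat V1 V2 w φ
  | w, Fml.and φ ψ => Sat V1 V2 w φ ∧ Sat V1 V2 w ψ
  | _, box φ => ∀ v, Sat V1 V2 v φ

/-- The variable assignment satisfies the `Con` constraint. -/
def ConC {W : Type*} (V1 V2 : ℕ → Set W) : Prop := ∀ x, V1 x ∩ V2 x = ∅

/-- The variable assignment satisfies the `Ground` constraint. -/
def GroundC {W : Type*} (V1 V2 : ℕ → Set W) : Prop :=
  ∀ x, (V1 x).Nonempty → (V2 x).Nonempty → ((V1 x ∪ V2 x)ᶜ : Set W).Nonempty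

/-- The variable assignment satisfies the `Min` constraint. -/
def MinC {W : Type*} (V1 V2 : ℕ → Set W) : Prop :=
  ∀ l : List ℕ, l ≠ [] → (∀ x ∈ l, ((V1 x ∪ V2 x)ᶜ : Set W).Nonempty) →
    (⋂ x ∈ l, ((V1 x ∪ V2 x)ᶜ : Set W)).Nonempty

/-- The prime conditions for a subset `S` of the tensor `[3]^n`, realized as
`Fin n → Fin 3` where the value `0` stands for the layer `T`, `1` for `F`,
and `2` for `N` (i.e. `1, 2, 3` in the paper's numbering). -/
def PrimeConditions (n : ℕ) (S : Set (Fin n → Fin 3)) : Prop :=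
  S.Nonempty ∧
  (∀ j : Fin n, (S ∩ {a | a j = 0}).Nonempty → (S ∩ {a | a j = 1}).Nonempty →
      (S ∩ {a | a j = 2}).Nonempty) ∧
  ∀ J : Set (Fin n), J.Nonempty →
    (∀ j ∈ J, (S ∩ {a | a j = 2}).Nonempty) →
    (S ∩ ⋂ j ∈ J, {a | a j = 2}).Nonempty

/-- `χ_1 = T`, `χ_2 = F`, `χ_3 = N` (with `Fin 3` values `0, 1, 2`). -/
def chi (k : Fin 3) (x : ℕ) : Fml :=
  if k = 0 then tt x else if k = 1 then ff x else Nf x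

/-- The extensional `n`-isolator `φ_a = χ_{a_1}(x_1) ∧ … ∧ χ_{a_n}(x_n)`
associated with a tuple `a ∈ [3]^n`. -/
def tupleFml {n : ℕ} (a : Fin n → Fin 3) : Fml :=
  bigAnd ((List.finRange n).map (fun i => chi (a i) (i.1 + 1)))

open Classical in
/-- The pre-`n`-isolator of `S ⊆ [3]^n`:
`⋀_{a ∈ S} ◇φ_a ∧ ⋀_{a ∉ S} ¬◇φ_a`. -/
noncomputable def preIsolator (n : ℕ) (S : Set (Fin n → Fin 3)) : Fml :=
  bigAnd (((Finset.univ : Finset (Fin n → Fin 3)).toList).map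
    (fun a => if a ∈ S then dia (tupleFml a) else Fml.neg (dia (tupleFml a))))


/-!
The sets containing the constant tuple `(3, …, 3)` all meet the prime conditions, since that
tuple alone witnesses every layer `j_3` and every intersection of them; toggling membership of
a fixed point shows these are exactly half of all subsets of `[3]^n`. Every singleton also
meets the prime conditions, and `{(1, …, 1)}` does not contain `(3, …, 3)` once `n ≥ 1`,
which makes the lower bound strict. The empty set is not prime, so not every subset is.
-/

open Set

theorem ncard_setOf_mem {α : Type*} [Fintype α] (a : α) :
    {S : Set α | a ∈ S}.ncard = 2 ^ (Fintype.card α - 1) := by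
  set A := {S : Set α | a ∈ S}
  have htoggle : (symmDiff · {a}) '' A = Aᶜ := by
    rw [(symmDiff_left_involutive _).image_eq_preimage_symm]
    ext S
    simp [A, mem_symmDiff]
  have hhalf : A.ncard + A.ncard = 2 ^ Fintype.card α := by
    conv_lhs => arg 2; rw [← ncard_image_of_injective A (symmDiff_left_injective {a}), htoggle]
    rw [ncard_add_ncard_compl, Nat.card_eq_fintype_card, Fintype.card_set]
  obtain ⟨m, hm⟩ : ∃ m, Fintype.card α = m + 1 :=
    Nat.exists_eq_add_one.mpr (Fintype.card_pos_iff.mpr ⟨a⟩)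
  rw [hm, pow_succ] at hhalf
  rw [hm, Nat.add_sub_cancel]
  omega

theorem two_pow_card_sub_one_lt_ncard {α : Type*} [Fintype α] {F : Set (Set α)} {a : α}
    {T : Set α} (hsub : {S | a ∈ S} ⊆ F) (hT : T ∈ F) (haT : a ∉ T) :
    2 ^ (Fintype.card α - 1) < F.ncard := by
  rw [← ncard_setOf_mem a]
  exact ncard_lt_ncard ((ssubset_iff_of_subset hsub).mpr ⟨T, hT, haT⟩)

theorem ncard_lt_two_pow_card {α : Type*} [Fintype α] {F : Set (Set α)} {U : Set α}
    (hU : U ∉ F) : F.ncard < 2 ^ Fintype.card α := by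
  rw [← Fintype.card_set, ← Nat.card_eq_fintype_card, ← ncard_univ]
  exact ncard_lt_ncard (ssubset_univ_iff.mpr (ne_univ_iff_exists_notMem F |>.mpr ⟨U, hU⟩))

theorem primeConditions_of_const_two_mem {n : ℕ} {S : Set (Fin n → Fin 3)}
    (h : (fun _ => 2) ∈ S) : PrimeConditions n S :=
  ⟨⟨_, h⟩, fun _ _ _ => ⟨_, h, rfl⟩, fun _ _ _ => ⟨_, h, mem_iInter₂.mpr fun _ _ => rfl⟩⟩

theorem primeConditions_singleton {n : ℕ} (a : Fin n → Fin 3) : PrimeConditions n {a} := by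
  refine ⟨singleton_nonempty a, fun j h0 h1 => ?_, fun J _ h2 => ⟨a, rfl, ?_⟩⟩
  · obtain ⟨_, rfl, ha0⟩ := h0
    obtain ⟨_, rfl, ha1⟩ := h1
    exact absurd (ha0.symm.trans ha1) (by decide)
  · refine mem_iInter₂.mpr fun j hj => ?_
    obtain ⟨_, rfl, ha2⟩ := h2 j hj
    exact ha2

theorem not_primeConditions_empty (n : ℕ) : ¬ PrimeConditions n ∅ :=
  fun h => not_nonempty_empty h.1

/-- the number of subsets of `[3]^n` meeting the prime
conditions lies strictly between `2^(3^n − 1)` and `2^(3^n)`. -/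
theorem count_prime_subsets_bounds (n : ℕ) (hn : 1 ≤ n) :
    2 ^ (3 ^ n - 1) < Nat.card {S : Set (Fin n → Fin 3) // PrimeConditions n S} ∧
      Nat.card {S : Set (Fin n → Fin 3) // PrimeConditions n S} < 2 ^ 3 ^ n := by
  have hcard : Fintype.card (Fin n → Fin 3) = 3 ^ n := by simp
  rw [← hcard, ← coe_ofPred, Nat.card_coe_set_eq]
  have hne : (fun _ => 2 : Fin n → Fin 3) ∉ ({fun _ => 0} : Set (Fin n → Fin 3)) := by
    simp only [mem_singleton_iff, funext_iff, not_forall]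
    exact ⟨⟨0, hn⟩, by decide⟩
  exact ⟨two_pow_card_sub_one_lt_ncard (fun _ => primeConditions_of_const_two_mem)
      (primeConditions_singleton _) hne,
    ncard_lt_two_pow_card (not_primeConditions_empty n)⟩

end KripkeModal
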